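/- Under the change of rigging ℓ' = ℓ + s with s tangent to Σ (so n(s) = 0), keeping the normal form n fixed, the induced objects transform as: ω'^a = ω^a - s^a n, Γ'^a_{bc} = Γ^a_{bc} + s^a K_{bc}, φ'_a = φ_a - s^b K_{ba}, and consequently the object Γ_c := φ_c + Γ^a_{ac} is invariant under changes of the rigging direction. -/

import Mathlib

noncomputable section

/-- Partial derivative in the `a`-th coordinate direction on `ℝ³`. -/
def pd (f : (Fin 3 → ℝ) → ℝ) (a : Fin 3) (ξ : Fin 3 → ℝ) : ℝ :=
  fderiv ℝ f ξ (Pi.single a 1)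

/-- Ambient covariant derivative along `e a` of an ambient vector field along Σ. -/
def cov (Ch : (Fin 3 → ℝ) → Fin 4 → Fin 4 → Fin 4 → ℝ)
    (e : Fin 3 → (Fin 3 → ℝ) → Fin 4 → ℝ)
    (a : Fin 3) (V : (Fin 3 → ℝ) → Fin 4 → ℝ) (ξ : Fin 3 → ℝ) (μ : Fin 4) : ℝ :=
  pd (fun ζ => V ζ μ) a ξ + ∑ ν, ∑ ρ, Ch ξ μ ν ρ * e a ξ ν * V ξ ρ

/-- Christoffel symbols `Γ̄^c_{ba} = ω^c(∇_{e_a} e_b)` of the rigged connection. -/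
def Gbar (Ch : (Fin 3 → ℝ) → Fin 4 → Fin 4 → Fin 4 → ℝ)
    (e : Fin 3 → (Fin 3 → ℝ) → Fin 4 → ℝ)
    (ω : Fin 3 → (Fin 3 → ℝ) → Fin 4 → ℝ)
    (c b a : Fin 3) (ξ : Fin 3 → ℝ) : ℝ :=
  ∑ μ, ω c ξ μ * cov Ch e a (e b) ξ μ

/-- Second fundamental form `K_{ab} = -n(∇_{e_a} e_b)`. -/
def sff (Ch : (Fin 3 → ℝ) → Fin 4 → Fin 4 → Fin 4 → ℝ)
    (e : Fin 3 → (Fin 3 → ℝ) → Fin 4 → ℝ)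
    (n : (Fin 3 → ℝ) → Fin 4 → ℝ) (a b : Fin 3) (ξ : Fin 3 → ℝ) : ℝ :=
  -∑ μ, n ξ μ * cov Ch e a (e b) ξ μ

/-- The one-form `φ_a = n(∇_{e_a} ℓ)`. -/
def phiF (Ch : (Fin 3 → ℝ) → Fin 4 → Fin 4 → Fin 4 → ℝ)
    (e : Fin 3 → (Fin 3 → ℝ) → Fin 4 → ℝ)
    (n ℓ : (Fin 3 → ℝ) → Fin 4 → ℝ) (a : Fin 3) (ξ : Fin 3 → ℝ) : ℝ :=
  ∑ μ, n ξ μ * cov Ch e a ℓ ξ μ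

lemma pd_add (f g : (Fin 3 → ℝ) → ℝ) (a : Fin 3) (ξ : Fin 3 → ℝ)
    (hf : DifferentiableAt ℝ f ξ) (hg : DifferentiableAt ℝ g ξ) :
    pd (fun ζ => f ζ + g ζ) a ξ = pd f a ξ + pd g a ξ := by
  unfold pd; rw [fderiv_fun_add hf hg]; rfl

lemma pd_mul (f g : (Fin 3 → ℝ) → ℝ) (a : Fin 3) (ξ : Fin 3 → ℝ)
    (hf : DifferentiableAt ℝ f ξ) (hg : DifferentiableAt ℝ g ξ) :
    pd (fun ζ => f ζ * g ζ) a ξ = pd f a ξ * g ξ + f ξ * pd g a ξ := by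
  unfold pd; rw [fderiv_fun_mul hf hg]; simp; ring

lemma pd_sum {ι} (t : Finset ι) (F : ι → (Fin 3 → ℝ) → ℝ) (a : Fin 3) (ξ : Fin 3 → ℝ)
    (hF : ∀ i ∈ t, DifferentiableAt ℝ (F i) ξ) :
    pd (fun ζ => ∑ i ∈ t, F i ζ) a ξ = ∑ i ∈ t, pd (F i) a ξ := by
  unfold pd; rw [fderiv_fun_sum hF]; simp

lemma sum_rot {α β γ : Type*} [Fintype α] [Fintype β] [Fintype γ]
    (f : α → β → γ → ℝ) :
    ∑ x : α, ∑ y : β, ∑ z : γ, f x y z = ∑ z : γ, ∑ x : α, ∑ y : β, f x y z :=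
  calc ∑ x : α, ∑ y : β, ∑ z : γ, f x y z
      = ∑ x : α, ∑ z : γ, ∑ y : β, f x y z :=
        Finset.sum_congr rfl fun _ _ => Finset.sum_comm
    _ = ∑ z : γ, ∑ x : α, ∑ y : β, f x y z := Finset.sum_comm

/-- Under the change of rigging `ℓ' = ℓ + s` with `s` tangent to
Σ (`n(s) = 0`), keeping the normal form `n` fixed (`n(ℓ') = 1`), the induced
objects transform as `ω'^a = ω^a - s^a n`, `Γ'^a_{bc} = Γ^a_{bc} + s^a K_{bc}`,
`φ'_a = φ_a - s^b K_{ba}`, and consequently `Γ_c := φ_c + Γ^a_{ac}` is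
invariant under changes of the rigging direction. -/
theorem stmt12
    (Ch : (Fin 3 → ℝ) → Fin 4 → Fin 4 → Fin 4 → ℝ)
    (e : Fin 3 → (Fin 3 → ℝ) → Fin 4 → ℝ)
    (ℓ ℓ' n : (Fin 3 → ℝ) → Fin 4 → ℝ)
    (ω ω' : Fin 3 → (Fin 3 → ℝ) → Fin 4 → ℝ)
    (s : (Fin 3 → ℝ) → Fin 3 → ℝ)
    (hChsym : ∀ ξ α β γ, Ch ξ α β γ = Ch ξ α γ β)
    (hesym : ∀ ξ a b μ, pd (fun ζ => e b ζ μ) a ξ = pd (fun ζ => e a ζ μ) b ξ)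
    (he : ∀ a μ, ContDiff ℝ (⊤ : ℕ∞) (fun ζ => e a ζ μ))
    (hℓs : ∀ μ, ContDiff ℝ (⊤ : ℕ∞) (fun ζ => ℓ ζ μ))
    (hss : ∀ b, ContDiff ℝ (⊤ : ℕ∞) (fun ζ => s ζ b))
    (hne : ∀ ξ a, ∑ μ, n ξ μ * e a ξ μ = 0)
    (hnl : ∀ ξ, ∑ μ, n ξ μ * ℓ ξ μ = 1)
    (hωl : ∀ ξ a, ∑ μ, ω a ξ μ * ℓ ξ μ = 0)
    (hωe : ∀ ξ a b, ∑ μ, ω a ξ μ * e b ξ μ = if a = b then (1 : ℝ) else 0)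
    (hcomp : ∀ ξ μ ν, ℓ ξ μ * n ξ ν + ∑ a, e a ξ μ * ω a ξ ν
      = if μ = ν then (1 : ℝ) else 0)
    (hℓ' : ∀ ξ μ, ℓ' ξ μ = ℓ ξ μ + ∑ b, s ξ b * e b ξ μ)
    (hω'l : ∀ ξ a, ∑ μ, ω' a ξ μ * ℓ' ξ μ = 0)
    (hω'e : ∀ ξ a b, ∑ μ, ω' a ξ μ * e b ξ μ = if a = b then (1 : ℝ) else 0)
    (hω'span : ∀ ξ a μ, ∃ (cn : ℝ) (cw : Fin 3 → ℝ), ω' a ξ μ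
      = cn * n ξ μ + ∑ b, cw b * ω b ξ μ) :
    (∀ ξ a μ, ω' a ξ μ = ω a ξ μ - s ξ a * n ξ μ)
    ∧ (∀ ξ c b a, Gbar Ch e ω' c b a ξ
        = Gbar Ch e ω c b a ξ + s ξ c * sff Ch e n b a ξ)
    ∧ (∀ ξ a, phiF Ch e n ℓ' a ξ
        = phiF Ch e n ℓ a ξ - ∑ b, s ξ b * sff Ch e n b a ξ)
    ∧ (∀ ξ c, phiF Ch e n ℓ' c ξ + (∑ a, Gbar Ch e ω' a a c ξ)
        = phiF Ch e n ℓ c ξ + ∑ a, Gbar Ch e ω a a c ξ) := by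
  -- symmetry of the second fundamental form
  have hsffsym : ∀ ξ a b, sff Ch e n a b ξ = sff Ch e n b a ξ := by
    intro ξ a b
    unfold sff cov
    congr 1
    refine Finset.sum_congr rfl fun μ _ => ?_
    congr 1
    rw [hesym ξ a b μ]
    congr 1
    rw [Finset.sum_comm]
    refine Finset.sum_congr rfl fun ν _ => Finset.sum_congr rfl fun ρ _ => ?_
    rw [hChsym ξ μ ν ρ]; ring
  -- ω' paired with ℓ
  have hω'ℓ : ∀ ξ a, ∑ μ, ω' a ξ μ * ℓ ξ μ = - s ξ a := by
    intro ξ a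
    have h0 := hω'l ξ a
    have hexp : ∑ μ, ω' a ξ μ * ℓ' ξ μ
        = (∑ μ, ω' a ξ μ * ℓ ξ μ) + ∑ b, s ξ b * ∑ μ, ω' a ξ μ * e b ξ μ := by
      simp_rw [hℓ', mul_add, Finset.sum_add_distrib, Finset.mul_sum]
      congr 1
      rw [Finset.sum_comm]
      exact Finset.sum_congr rfl fun b _ => Finset.sum_congr rfl fun μ _ => by ring
    rw [hexp] at h0
    simp [hω'e] at h0
    linarith
  -- part 1
  have part1 : ∀ ξ a μ, ω' a ξ μ = ω a ξ μ - s ξ a * n ξ μ := by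
    intro ξ a ν
    have h1 : ω' a ξ ν = ∑ μ, ω' a ξ μ * (if μ = ν then (1 : ℝ) else 0) := by simp
    rw [h1]
    have h2 : ∑ μ, ω' a ξ μ * (if μ = ν then (1 : ℝ) else 0)
        = (∑ μ, ω' a ξ μ * ℓ ξ μ) * n ξ ν
          + ∑ b, (∑ μ, ω' a ξ μ * e b ξ μ) * ω b ξ ν := by
      have ha : ∑ μ, ω' a ξ μ * (if μ = ν then (1 : ℝ) else 0)
          = ∑ μ, ω' a ξ μ * (ℓ ξ μ * n ξ ν + ∑ b, e b ξ μ * ω b ξ ν) :=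
        Finset.sum_congr rfl fun μ _ => by rw [hcomp]
      rw [ha]
      simp_rw [mul_add, Finset.sum_add_distrib, Finset.mul_sum, Finset.sum_mul]
      congr 1
      · exact Finset.sum_congr rfl fun μ _ => by ring
      · rw [Finset.sum_comm]
        exact Finset.sum_congr rfl fun b _ => Finset.sum_congr rfl fun μ _ => by ring
    rw [h2, hω'ℓ]
    simp [hω'e]
    ring
  have part2 : ∀ ξ c b a, Gbar Ch e ω' c b a ξ
      = Gbar Ch e ω c b a ξ + s ξ c * sff Ch e n b a ξ := by
    intro ξ c b a
    rw [← hsffsym ξ a b]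
    unfold Gbar sff
    simp_rw [part1, sub_mul]
    rw [Finset.sum_sub_distrib]
    have hs : ∑ x : Fin 4, s ξ c * n ξ x * cov Ch e a (e b) ξ x
        = s ξ c * ∑ x : Fin 4, n ξ x * cov Ch e a (e b) ξ x := by
      rw [Finset.mul_sum]
      exact Finset.sum_congr rfl fun μ _ => by ring
    rw [hs]
    ring
  have part3' : ∀ ξ a, phiF Ch e n ℓ' a ξ
      = phiF Ch e n ℓ a ξ - ∑ b, s ξ b * sff Ch e n b a ξ := by
    intro ξ a
    have part3 : ∀ ξ a, phiF Ch e n ℓ' a ξ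
        = phiF Ch e n ℓ a ξ - ∑ b, s ξ b * sff Ch e n a b ξ := by
      intro ξ a
      have hcov : ∀ μ, cov Ch e a ℓ' ξ μ = cov Ch e a ℓ ξ μ
          + ∑ b, pd (fun ζ => s ζ b) a ξ * e b ξ μ
          + ∑ b, s ξ b * cov Ch e a (e b) ξ μ := by
        intro μ
        unfold cov
        have hfun : (fun ζ => ℓ' ζ μ) = fun ζ => ℓ ζ μ + ∑ b, s ζ b * e b ζ μ :=
          funext fun ζ => hℓ' ζ μ
        have hdℓ : DifferentiableAt ℝ (fun ζ => ℓ ζ μ) ξ :=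
          ((hℓs μ).differentiable (by simp)) ξ
        have hd : ∀ b : Fin 3, DifferentiableAt ℝ (fun ζ => s ζ b * e b ζ μ) ξ :=
          fun b => (((hss b).differentiable (by simp)) ξ).mul
            (((he b μ).differentiable (by simp)) ξ)
        have hds : DifferentiableAt ℝ (fun ζ => ∑ b, s ζ b * e b ζ μ) ξ := by
          apply DifferentiableAt.fun_sum; intro b _; exact hd b
        rw [hfun, pd_add _ _ _ _ hdℓ hds, pd_sum _ _ _ _ (fun b _ => hd b)]
        have hChterm : ∑ ν, ∑ ρ, Ch ξ μ ν ρ * e a ξ ν * ℓ' ξ ρ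
            = (∑ ν, ∑ ρ, Ch ξ μ ν ρ * e a ξ ν * ℓ ξ ρ)
              + ∑ b, s ξ b * ∑ ν, ∑ ρ, Ch ξ μ ν ρ * e a ξ ν * e b ξ ρ := by
          have hterm : ∀ ν ρ, Ch ξ μ ν ρ * e a ξ ν * ℓ' ξ ρ
              = Ch ξ μ ν ρ * e a ξ ν * ℓ ξ ρ
                + ∑ b, s ξ b * (Ch ξ μ ν ρ * e a ξ ν * e b ξ ρ) := by
            intro ν ρ
            rw [hℓ', mul_add, Finset.mul_sum]
            congr 1
            exact Finset.sum_congr rfl fun b _ => by ring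
          simp_rw [hterm, Finset.sum_add_distrib]
          congr 1
          rw [sum_rot]
          refine Finset.sum_congr rfl fun b _ => ?_
          rw [Finset.mul_sum]
          exact Finset.sum_congr rfl fun ν _ => (Finset.mul_sum _ _ _).symm
        rw [hChterm]
        have hpdmul : ∀ b : Fin 3, pd (fun ζ => s ζ b * e b ζ μ) a ξ
            = pd (fun ζ => s ζ b) a ξ * e b ξ μ + s ξ b * pd (fun ζ => e b ζ μ) a ξ :=
          fun b => pd_mul _ _ _ _ (((hss b).differentiable (by simp)) ξ)
            (((he b μ).differentiable (by simp)) ξ)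
        simp_rw [hpdmul]
        rw [Finset.sum_add_distrib]
        simp_rw [mul_add, Finset.mul_sum]
        ring_nf
        rw [Finset.sum_add_distrib]
        ring
      unfold phiF
      simp_rw [hcov, mul_add, Finset.sum_add_distrib, Finset.mul_sum]
      have h1 : ∑ μ, ∑ b, n ξ μ * (pd (fun ζ => s ζ b) a ξ * e b ξ μ) = 0 := by
        rw [Finset.sum_comm]
        refine Finset.sum_eq_zero fun b _ => ?_
        have : ∑ μ, n ξ μ * (pd (fun ζ => s ζ b) a ξ * e b ξ μ)
            = pd (fun ζ => s ζ b) a ξ * ∑ μ, n ξ μ * e b ξ μ := by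
          rw [Finset.mul_sum]
          exact Finset.sum_congr rfl fun μ _ => by ring
        rw [this, hne, mul_zero]
      have h2 : ∑ μ, ∑ b, n ξ μ * (s ξ b * cov Ch e a (e b) ξ μ)
          = - ∑ b, s ξ b * sff Ch e n a b ξ := by
        rw [Finset.sum_comm]
        unfold sff
        rw [← Finset.sum_neg_distrib]
        refine Finset.sum_congr rfl fun b _ => ?_
        rw [mul_neg, neg_neg, Finset.mul_sum]
        exact Finset.sum_congr rfl fun μ _ => by ring
      rw [h1, h2]
      ring
    rw [part3 ξ a]
    congr 1
    exact Finset.sum_congr rfl fun b _ => by rw [hsffsym ξ a b]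
  refine ⟨part1, part2, part3', fun ξ c => ?_⟩
  rw [part3' ξ c]
  have hG : ∑ a, Gbar Ch e ω' a a c ξ
      = ∑ a, (Gbar Ch e ω a a c ξ + s ξ a * sff Ch e n a c ξ) :=
    Finset.sum_congr rfl fun a _ => part2 ξ a a c
  rw [hG, Finset.sum_add_distrib]
  ring

end
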